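/- arXiv:solv-int/9610008 — 2 statements merged into one kernel-verified Lean document; each statement's English description precedes it below -/
import Mathlib

section
/- Let N be a positive integer, let L, A : ℝ → Matrix (Fin N) (Fin N) ℝ be time-dependent matrices with L differentiable and satisfying L'(t) = [A(t), L(t)] for all t, and let α₁, α₂ be real constants. Define L_new(t) = α₁ (L(t) ⊗ L(t)) + α₂ (L(t) ⊗ I_N + I_N ⊗ L(t)) and A_new(t) = A(t) ⊗ I_N + I_N ⊗ A(t). Then L_new satisfies the Lax equation L_new'(t) = [A_new(t), L_new(t)] for all t. -/
/-!
Both `d/dt` and `ad (A ⊗ 1 + 1 ⊗ A)` obey the Leibniz rule on Kronecker products `X ⊗ Y`, and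
they agree on the two factors that occur in `L_new`: on `L` by the Lax equation, on `1` since both
vanish there. Hence they agree on `L ⊗ L`, `L ⊗ 1` and `1 ⊗ L`, and by linearity on `L_new`.
-/

open Matrix Kronecker

attribute [local instance 100] LieRing.ofAssociativeRing

namespace Matrix

variable {R l m n p : Type*}

theorem sub_kronecker [NonUnitalNonAssocRing R] (A₁ A₂ : Matrix l m R) (B : Matrix n p R) :
    (A₁ - A₂) ⊗ₖ B = A₁ ⊗ₖ B - A₂ ⊗ₖ B := by
  ext; simp [sub_mul]

theorem kronecker_sub [NonUnitalNonAssocRing R] (A : Matrix l m R) (B₁ B₂ : Matrix n p R) :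
    A ⊗ₖ (B₁ - B₂) = A ⊗ₖ B₁ - A ⊗ₖ B₂ := by
  ext; simp [mul_sub]

theorem lie_kroneckerSum_kronecker [CommRing R] [Fintype m] [DecidableEq m] [Fintype n]
    [DecidableEq n] (A X : Matrix m m R) (B Y : Matrix n n R) :
    ⁅A ⊗ₖ 1 + 1 ⊗ₖ B, X ⊗ₖ Y⁆ = ⁅A, X⁆ ⊗ₖ Y + X ⊗ₖ ⁅B, Y⁆ := by
  simp only [Ring.lie_def, Matrix.add_mul, Matrix.mul_add, ← mul_kronecker_mul, Matrix.one_mul,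
    Matrix.mul_one, sub_kronecker, kronecker_sub]
  abel

theorem hasDerivAt_kronecker_apply {𝕜 : Type*} [NontriviallyNormedField 𝕜]
    {X : 𝕜 → Matrix l m 𝕜} {Y : 𝕜 → Matrix n p 𝕜} {X' : Matrix l m 𝕜} {Y' : Matrix n p 𝕜}
    {t : 𝕜} (hX : ∀ i j, HasDerivAt (fun s => X s i j) (X' i j) t)
    (hY : ∀ i j, HasDerivAt (fun s => Y s i j) (Y' i j) t) (i : l × n) (j : m × p) :
    HasDerivAt (fun s => (X s ⊗ₖ Y s) i j) ((X' ⊗ₖ Y t + X t ⊗ₖ Y') i j) t :=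
  (hX i.1 j.1).mul (hY i.2 j.2)

end Matrix

theorem self_kronecker_lax_representation_general
    (N : ℕ)
    (L A : ℝ → Matrix (Fin N) (Fin N) ℝ)
    (hL : ∀ t : ℝ, ∀ i j : Fin N,
      HasDerivAt (fun s => L s i j) ((A t * L t - L t * A t) i j) t)
    (α₁ α₂ : ℝ)
    (Lnew Anew : ℝ → Matrix (Fin N × Fin N) (Fin N × Fin N) ℝ)
    (hLnew : ∀ t : ℝ, Lnew t =
      α₁ • (L t ⊗ₖ L t) +
      α₂ • (L t ⊗ₖ (1 : Matrix (Fin N) (Fin N) ℝ) +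
            (1 : Matrix (Fin N) (Fin N) ℝ) ⊗ₖ L t))
    (hAnew : ∀ t : ℝ, Anew t =
      A t ⊗ₖ (1 : Matrix (Fin N) (Fin N) ℝ) +
      (1 : Matrix (Fin N) (Fin N) ℝ) ⊗ₖ A t) :
    ∀ t : ℝ, ∀ i j : Fin N × Fin N,
      HasDerivAt (fun s => Lnew s i j) ((Anew t * Lnew t - Lnew t * Anew t) i j) t := by
  intro t i j
  have hLt : ∀ i j, HasDerivAt (fun s => L s i j) (⁅A t, L t⁆ i j) t := hL t
  have hOne : ∀ i j : Fin N, HasDerivAt (fun _ => (1 : Matrix (Fin N) (Fin N) ℝ) i j)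
      ((0 : Matrix (Fin N) (Fin N) ℝ) i j) t :=
    fun _ _ => hasDerivAt_const _ _
  have hBracket : Anew t * Lnew t - Lnew t * Anew t =
      α₁ • (⁅A t, L t⁆ ⊗ₖ L t + L t ⊗ₖ ⁅A t, L t⁆) + α₂ • (⁅A t, L t⁆ ⊗ₖ 1 + 1 ⊗ₖ ⁅A t, L t⁆) := by
    have hA1 : ⁅A t, (1 : Matrix (Fin N) (Fin N) ℝ)⁆ = 0 := by
      rw [LieRing.of_associative_ring_bracket, Matrix.mul_one, Matrix.one_mul, sub_self]
    rw [← LieRing.of_associative_ring_bracket, hLnew, hAnew]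
    simp only [lie_add, lie_smul, lie_kroneckerSum_kronecker, hA1, zero_kronecker, kronecker_zero,
      add_zero, zero_add]
  rw [hBracket]
  simp only [hLnew]
  refine (((hasDerivAt_kronecker_apply hLt hLt i j).const_mul α₁).add
    (((hasDerivAt_kronecker_apply hLt hOne i j).add
      (hasDerivAt_kronecker_apply hOne hLt i j)).const_mul α₂)).congr_deriv ?_
  simp only [zero_kronecker, kronecker_zero, add_zero, zero_add, Matrix.add_apply,
    Matrix.smul_apply, smul_eq_mul, Matrix.zero_apply]

/-- Self-Kronecker construction of new Lax representations: if `L' = [A, L]`, then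
`L_new = α₁ (L ⊗ L) + α₂ (L ⊗ I_N + I_N ⊗ L)` satisfies `L_new' = [A_new, L_new]`
with `A_new = A ⊗ I_N + I_N ⊗ A`. -/
theorem self_kronecker_lax_representation
    (N : ℕ) (hN : 0 < N)
    (L A : ℝ → Matrix (Fin N) (Fin N) ℝ)
    (hL : ∀ t : ℝ, ∀ i j : Fin N,
      HasDerivAt (fun s => L s i j) ((A t * L t - L t * A t) i j) t)
    (α₁ α₂ : ℝ)
    (Lnew Anew : ℝ → Matrix (Fin N × Fin N) (Fin N × Fin N) ℝ)
    (hLnew : ∀ t : ℝ, Lnew t =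
      α₁ • (L t ⊗ₖ L t) +
      α₂ • (L t ⊗ₖ (1 : Matrix (Fin N) (Fin N) ℝ) +
            (1 : Matrix (Fin N) (Fin N) ℝ) ⊗ₖ L t))
    (hAnew : ∀ t : ℝ, Anew t =
      A t ⊗ₖ (1 : Matrix (Fin N) (Fin N) ℝ) +
      (1 : Matrix (Fin N) (Fin N) ℝ) ⊗ₖ A t) :
    ∀ t : ℝ, ∀ i j : Fin N × Fin N,
      HasDerivAt (fun s => Lnew s i j) ((Anew t * Lnew t - Lnew t * Anew t) i j) t :=
  self_kronecker_lax_representation_general N L A hL α₁ α₂ Lnew Anew hLnew hAnew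
end

section
/- Let p, q : ℝ → ℝ → ℝ be functions of (x, t) that are twice differentiable in x and differentiable in t and satisfy p_t = −½ p_{xx} + p²q and q_t = ½ q_{xx} − pq² at every point. For λ ∈ ℝ define the 4×4 matrices U_new = [[−2λ, p, p, 0],[q, 0, 0, p],[q, 0, 0, p],[0, q, q, 2λ]] and V_new = [[−2λ² + pq, λp − p_x/2, λp − p_x/2, 0],[λq + q_x/2, 0, 0, λp − p_x/2],[λq + q_x/2, 0, 0, λp − p_x/2],[0, λq + q_x/2, λq + q_x/2, 2λ² − pq]]. Then the continuous zero curvature equation ∂_t U_new − ∂_x V_new + [U_new, V_new] = 0 holds at every point (x,t) for every λ ∈ ℝ. -/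
/-!
`U_new` and `V_new` are, after the reindexing `Fin 2 × Fin 2 ≃ Fin 4`, the Kronecker sums
`U ⊗ 1 + 1 ⊗ U` and `V ⊗ 1 + 1 ⊗ V` of the 2×2 AKNS pair. Since `A ⊗ 1` and `1 ⊗ B` commute,
the bracket of two Kronecker sums is the Kronecker sum of the brackets, and entrywise derivatives
pass through Kronecker sums as well. Hence the curvature `Uₜ - Vₓ + [U, V]` of the 4×4 pair is the
Kronecker sum of two copies of the curvature of the AKNS pair, which vanishes because
`p, q` solve the NLS-type system.
-/

open Matrix

open scoped Kronecker

namespace Matrix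

variable {R m n : Type*}

section Semiring

variable [Semiring R] [DecidableEq m] [DecidableEq n]

def kroneckerSum (A : Matrix m m R) (B : Matrix n n R) : Matrix (m × n) (m × n) R :=
  A ⊗ₖ 1 + 1 ⊗ₖ B

@[simp]
theorem kroneckerSum_zero : kroneckerSum (0 : Matrix m m R) (0 : Matrix n n R) = 0 := by
  simp [kroneckerSum]

theorem kroneckerSum_add (A C : Matrix m m R) (B D : Matrix n n R) :
    kroneckerSum (A + C) (B + D) = kroneckerSum A B + kroneckerSum C D := by
  simp only [kroneckerSum, add_kronecker, kronecker_add]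
  abel

end Semiring

theorem kroneckerSum_sub [Ring R] [DecidableEq m] [DecidableEq n]
    (A C : Matrix m m R) (B D : Matrix n n R) :
    kroneckerSum (A - C) (B - D) = kroneckerSum A B - kroneckerSum C D := by
  ext
  simp only [kroneckerSum, add_apply, sub_apply, kroneckerMap_apply, sub_mul, mul_sub]
  abel

theorem lie_kroneckerSum [CommRing R] [Fintype m] [Fintype n] [DecidableEq m] [DecidableEq n]
    (A C : Matrix m m R) (B D : Matrix n n R) :
    ⁅kroneckerSum A B, kroneckerSum C D⁆ = kroneckerSum ⁅A, C⁆ ⁅B, D⁆ := by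
  simp only [Ring.lie_def, kroneckerSum_sub]
  simp only [kroneckerSum, add_mul, mul_add, ← mul_kronecker_mul, one_mul, mul_one]
  abel

noncomputable def entrywiseDeriv (M : ℝ → Matrix m n ℝ) (t : ℝ) : Matrix m n ℝ :=
  of fun i j => deriv (fun s => M s i j) t

theorem entrywiseDeriv_kroneckerSum [DecidableEq m] [DecidableEq n]
    {A : ℝ → Matrix m m ℝ} {B : ℝ → Matrix n n ℝ} {t : ℝ}
    (hA : ∀ i j, DifferentiableAt ℝ (fun s => A s i j) t)
    (hB : ∀ i j, DifferentiableAt ℝ (fun s => B s i j) t) :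
    entrywiseDeriv (fun s => kroneckerSum (A s) (B s)) t =
      kroneckerSum (entrywiseDeriv A t) (entrywiseDeriv B t) := by
  ext ⟨i, k⟩ ⟨j, l⟩
  simp only [entrywiseDeriv, kroneckerSum, of_apply, add_apply, kronecker_apply]
  rw [deriv_fun_add ((hA i j).mul_const _) ((hB k l).const_mul _), deriv_mul_const (hA i j),
    deriv_const_mul _ (hB k l)]

theorem entrywiseDeriv_reindex {m' n' : Type*} (eₘ : m ≃ m') (eₙ : n ≃ n')
    (M : ℝ → Matrix m n ℝ) (t : ℝ) :
    entrywiseDeriv (fun s => reindex eₘ eₙ (M s)) t = reindex eₘ eₙ (entrywiseDeriv M t) :=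
  rfl

end Matrix

section LaxCurvature

variable {n : Type*} [Fintype n] [DecidableEq n]

/-- The curvature `Uₜ - Vₓ + [U, V]` of the connection `(∂ₓ - U, ∂ₜ - V)`. -/
noncomputable def laxCurvature (U V : ℝ → ℝ → Matrix n n ℝ) (x t : ℝ) : Matrix n n ℝ :=
  entrywiseDeriv (U x) t - entrywiseDeriv (fun y => V y t) x + ⁅U x t, V x t⁆

theorem laxCurvature_reindex {n' : Type*} [Fintype n'] [DecidableEq n'] (e : n ≃ n')
    (U V : ℝ → ℝ → Matrix n n ℝ) (x t : ℝ) :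
    laxCurvature (fun x t => reindex e e (U x t)) (fun x t => reindex e e (V x t)) x t =
      reindex e e (laxCurvature U V x t) := by
  simp only [laxCurvature, entrywiseDeriv_reindex, Ring.lie_def]
  simp only [← coe_reindexAlgEquiv ℝ ℝ, map_add, map_sub, map_mul]

theorem laxCurvature_kroneckerSum {m : Type*} [Fintype m] [DecidableEq m]
    {U V : ℝ → ℝ → Matrix m m ℝ} {U' V' : ℝ → ℝ → Matrix n n ℝ} {x t : ℝ}
    (hU : ∀ i j, DifferentiableAt ℝ (fun s => U x s i j) t)
    (hU' : ∀ i j, DifferentiableAt ℝ (fun s => U' x s i j) t)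
    (hV : ∀ i j, DifferentiableAt ℝ (fun y => V y t i j) x)
    (hV' : ∀ i j, DifferentiableAt ℝ (fun y => V' y t i j) x) :
    laxCurvature (fun x t => kroneckerSum (U x t) (U' x t))
        (fun x t => kroneckerSum (V x t) (V' x t)) x t =
      kroneckerSum (laxCurvature U V x t) (laxCurvature U' V' x t) := by
  simp only [laxCurvature]
  rw [entrywiseDeriv_kroneckerSum hU hU', entrywiseDeriv_kroneckerSum hV hV', lie_kroneckerSum,
    kroneckerSum_add, kroneckerSum_sub]

end LaxCurvature

section AKNS

variable (p q : ℝ → ℝ → ℝ) (l : ℝ)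

def aknsU (x t : ℝ) : Matrix (Fin 2) (Fin 2) ℝ :=
  !![-l, p x t; q x t, l]

noncomputable def aknsV (x t : ℝ) : Matrix (Fin 2) (Fin 2) ℝ :=
  !![-l ^ 2 + p x t * q x t / 2, l * p x t - deriv (fun y => p y t) x / 2;
     l * q x t + deriv (fun y => q y t) x / 2, l ^ 2 - p x t * q x t / 2]

variable {p q} {x t : ℝ}

theorem differentiableAt_aknsU_apply (hp : DifferentiableAt ℝ (fun s => p x s) t)
    (hq : DifferentiableAt ℝ (fun s => q x s) t) (i j : Fin 2) :
    DifferentiableAt ℝ (fun s => aknsU p q l x s i j) t := by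
  fin_cases i <;> fin_cases j <;> simp [aknsU, hp, hq]

theorem differentiableAt_aknsV_apply (hp : DifferentiableAt ℝ (fun y => p y t) x)
    (hpx : DifferentiableAt ℝ (deriv fun y => p y t) x)
    (hq : DifferentiableAt ℝ (fun y => q y t) x)
    (hqx : DifferentiableAt ℝ (deriv fun y => q y t) x) (i j : Fin 2) :
    DifferentiableAt ℝ (fun y => aknsV p q l y t i j) x := by
  fin_cases i <;> fin_cases j <;> simp [aknsV] <;> fun_prop

theorem entrywiseDeriv_aknsU :
    entrywiseDeriv (aknsU p q l x) t =
      !![0, deriv (fun s => p x s) t; deriv (fun s => q x s) t, 0] := by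
  ext i j
  fin_cases i <;> fin_cases j <;> simp [entrywiseDeriv, aknsU]

theorem entrywiseDeriv_aknsV (hp : DifferentiableAt ℝ (fun y => p y t) x)
    (hpx : DifferentiableAt ℝ (deriv fun y => p y t) x)
    (hq : DifferentiableAt ℝ (fun y => q y t) x)
    (hqx : DifferentiableAt ℝ (deriv fun y => q y t) x) :
    entrywiseDeriv (fun y => aknsV p q l y t) x =
      !![(deriv (fun y => p y t) x * q x t + p x t * deriv (fun y => q y t) x) / 2,
          l * deriv (fun y => p y t) x - deriv (deriv fun y => p y t) x / 2;
        l * deriv (fun y => q y t) x + deriv (deriv fun y => q y t) x / 2,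
          -(deriv (fun y => p y t) x * q x t + p x t * deriv (fun y => q y t) x) / 2] := by
  ext i j
  fin_cases i <;> fin_cases j <;>
    simp [entrywiseDeriv, aknsV, deriv_fun_mul hp hq,
      deriv_fun_sub (hp.const_mul l) (hpx.div_const 2),
      deriv_fun_add (hq.const_mul l) (hqx.div_const 2)]
  ring

theorem laxCurvature_akns_eq_zero (hp : DifferentiableAt ℝ (fun y => p y t) x)
    (hpx : DifferentiableAt ℝ (deriv fun y => p y t) x)
    (hq : DifferentiableAt ℝ (fun y => q y t) x)
    (hqx : DifferentiableAt ℝ (deriv fun y => q y t) x)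
    (hpt : deriv (fun s => p x s) t =
      -(1 / 2) * deriv (deriv fun y => p y t) x + p x t ^ 2 * q x t)
    (hqt : deriv (fun s => q x s) t =
      (1 / 2) * deriv (deriv fun y => q y t) x - p x t * q x t ^ 2) :
    laxCurvature (aknsU p q l) (aknsV p q l) x t = 0 := by
  rw [laxCurvature, entrywiseDeriv_aknsU, entrywiseDeriv_aknsV l hp hpx hq hqx, Ring.lie_def,
    hpt, hqt, aknsU, aknsV, mul_fin_two, mul_fin_two]
  ext i j
  fin_cases i <;> fin_cases j <;> simp <;> ring

end AKNS

section KroneckerAKNS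

variable (p q : ℝ → ℝ → ℝ) (l x t : ℝ)

theorem reindex_kroneckerSum_aknsU :
    reindex finProdFinEquiv finProdFinEquiv (kroneckerSum (aknsU p q l x t) (aknsU p q l x t)) =
      !![-(2 * l), p x t, p x t, 0;
         q x t, 0, 0, p x t;
         q x t, 0, 0, p x t;
         0, q x t, q x t, 2 * l] := by
  ext i j
  fin_cases i <;> fin_cases j <;>
    simp [kroneckerSum, aknsU, finProdFinEquiv, Fin.divNat, Fin.modNat, one_apply, two_mul]

theorem reindex_kroneckerSum_aknsV :
    reindex finProdFinEquiv finProdFinEquiv (kroneckerSum (aknsV p q l x t) (aknsV p q l x t)) =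
      !![-(2 * l ^ 2) + p x t * q x t,
           l * p x t - deriv (fun y => p y t) x / 2,
           l * p x t - deriv (fun y => p y t) x / 2, 0;
         l * q x t + deriv (fun y => q y t) x / 2, 0, 0,
           l * p x t - deriv (fun y => p y t) x / 2;
         l * q x t + deriv (fun y => q y t) x / 2, 0, 0,
           l * p x t - deriv (fun y => p y t) x / 2;
         0, l * q x t + deriv (fun y => q y t) x / 2,
           l * q x t + deriv (fun y => q y t) x / 2,
           2 * l ^ 2 - p x t * q x t] := by
  ext i j
  fin_cases i <;> fin_cases j <;>
    simp [kroneckerSum, aknsV, finProdFinEquiv, Fin.divNat, Fin.modNat, one_apply] <;> ring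

end KroneckerAKNS

/-- The 4×4 Kronecker-sum zero curvature representation of the nonlinear
Schrödinger-type system: if `pₜ = -½ pₓₓ + p²q` and `qₜ = ½ qₓₓ - pq²`, then
`U_new = U ⊗ I₂ + I₂ ⊗ U` and `V_new = V ⊗ I₂ + I₂ ⊗ V` (written out as explicit
4×4 matrices) satisfy `∂ₜU_new - ∂ₓV_new + [U_new, V_new] = 0` for all `λ, x, t`.
Arguments are `(x, t)`; partial derivatives are taken entrywise via `deriv`. -/
theorem nls_kronecker_zero_curvature
    (p q : ℝ → ℝ → ℝ)
    -- twice differentiable in x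
    (hpx : ∀ t : ℝ, Differentiable ℝ (fun x => p x t))
    (hpxx : ∀ t : ℝ, Differentiable ℝ (deriv (fun x => p x t)))
    (hqx : ∀ t : ℝ, Differentiable ℝ (fun x => q x t))
    (hqxx : ∀ t : ℝ, Differentiable ℝ (deriv (fun x => q x t)))
    -- differentiable in t
    (hpt : ∀ x : ℝ, Differentiable ℝ (fun t => p x t))
    (hqt : ∀ x : ℝ, Differentiable ℝ (fun t => q x t))
    -- the nonlinear Schrödinger-type system
    (hsys : ∀ x t : ℝ,
      deriv (fun s => p x s) t =
        -(1 / 2) * deriv (deriv (fun y => p y t)) x + (p x t) ^ 2 * q x t ∧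
      deriv (fun s => q x s) t =
        (1 / 2) * deriv (deriv (fun y => q y t)) x - p x t * (q x t) ^ 2)
    (Unew Vnew : ℝ → ℝ → ℝ → Matrix (Fin 4) (Fin 4) ℝ)
    (hUnew : ∀ l x t : ℝ, Unew l x t =
      !![-(2 * l), p x t, p x t, 0;
         q x t, 0, 0, p x t;
         q x t, 0, 0, p x t;
         0, q x t, q x t, 2 * l])
    (hVnew : ∀ l x t : ℝ, Vnew l x t =
      !![-(2 * l ^ 2) + p x t * q x t,
           l * p x t - deriv (fun y => p y t) x / 2,
           l * p x t - deriv (fun y => p y t) x / 2, 0;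
         l * q x t + deriv (fun y => q y t) x / 2, 0, 0,
           l * p x t - deriv (fun y => p y t) x / 2;
         l * q x t + deriv (fun y => q y t) x / 2, 0, 0,
           l * p x t - deriv (fun y => p y t) x / 2;
         0, l * q x t + deriv (fun y => q y t) x / 2,
           l * q x t + deriv (fun y => q y t) x / 2,
           2 * l ^ 2 - p x t * q x t]) :
    ∀ l x t : ℝ,
      (Matrix.of fun i j => deriv (fun s => Unew l x s i j) t) -
          (Matrix.of fun i j => deriv (fun y => Vnew l y t i j) x) +
        (Unew l x t * Vnew l x t - Vnew l x t * Unew l x t) = 0 := by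
  intro l x t
  have hU : Unew l = fun x t => reindex finProdFinEquiv finProdFinEquiv
      (kroneckerSum (aknsU p q l x t) (aknsU p q l x t)) := by
    funext x t
    rw [hUnew, reindex_kroneckerSum_aknsU]
  have hV : Vnew l = fun x t => reindex finProdFinEquiv finProdFinEquiv
      (kroneckerSum (aknsV p q l x t) (aknsV p q l x t)) := by
    funext x t
    rw [hVnew, reindex_kroneckerSum_aknsV]
  have hU_diff := differentiableAt_aknsU_apply l (hpt x t) (hqt x t)
  have hV_diff := differentiableAt_aknsV_apply l (hpx t x) (hpxx t x) (hqx t x) (hqxx t x)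
  have hzc := laxCurvature_akns_eq_zero l (hpx t x) (hpxx t x) (hqx t x) (hqxx t x)
    (hsys x t).1 (hsys x t).2
  calc _ = laxCurvature (Unew l) (Vnew l) x t := by rw [laxCurvature, Ring.lie_def]; rfl
    _ = 0 := by
      rw [hU, hV, laxCurvature_reindex, laxCurvature_kroneckerSum hU_diff hU_diff hV_diff hV_diff,
        hzc, kroneckerSum_zero]
      rfl
end
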